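/- Let U₁, …, U_s be independent random variables, each uniformly distributed on (0,1), let r, s be positive integers with r ≤ s, and let X₀ be a random variable with the gamma distribution with shape α₀ > 0 and rate 1, independent of (U₁,…,U_s). Define Y₁ = X₀ - ∑_{i=1}^r ln U_i and Y₂ = X₀ - ∑_{i=1}^s ln(1-U_i). Then Cov(Y₁, Y₂) = α₀ + r·(1 - π²/6). -/

import Mathlib

open Real MeasureTheory ProbabilityTheory Set Filter Topology
open scoped Nat

/-!
Covariance is bilinear and vanishes on independent pairs, so of all the terms of
`Cov(Y₁, Y₂)` only `Var X₀ = α₀` and the `r` diagonal terms `Cov(log Uᵢ, log (1 - Uᵢ))` survive.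
The gamma moments follow from `x ^ k` times the gamma density being a multiple of another gamma
density. For the diagonal term, substituting `x = exp (-t)` turns `∫₀¹ xⁿ (-log x)ᵏ` into a
Gamma integral, equal to `k! / (n + 1) ^ (k + 1)`; expanding `log (1 - x) = -∑ xⁿ⁺¹ / (n + 1)` gives
`∫₀¹ log x log (1 - x) = ∑ 1 / ((n + 1) (n + 2)²) = 2 - π² / 6`, hence the covariance
`2 - π² / 6 - (-1) (-1)`.
-/

lemma memLp_comp_of_map_eq {Ω α : Type*} [MeasurableSpace Ω] [MeasurableSpace α]
    {P : Measure Ω} {μ : Measure α} {V : Ω → α} (hV : AEMeasurable V P) (hmap : P.map V = μ)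
    {p : ENNReal} {f : α → ℝ} (hf : MemLp f p μ) : MemLp (fun ω ↦ f (V ω)) p P :=
  (memLp_map_measure_iff (hmap ▸ hf.aestronglyMeasurable) hV).1 (hmap ▸ hf)

namespace ProbabilityTheory

variable {a r : ℝ}

lemma integral_gammaMeasure (ha : 0 < a) (hr : 0 < r) (g : ℝ → ℝ) :
    ∫ x, g x ∂gammaMeasure a r = ∫ x, gammaPDFReal a r x * g x := by
  rw [gammaMeasure, integral_withDensity_eq_integral_toReal_smul
    (show Measurable (gammaPDF a r) from (measurable_gammaPDFReal a r).ennreal_ofReal)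
    (ae_of_all _ fun _ ↦ ENNReal.ofReal_lt_top)]
  simp only [gammaPDF, ENNReal.toReal_ofReal (gammaPDFReal_nonneg ha hr _), smul_eq_mul]

lemma gammaPDFReal_mul_pow (ha : 0 < a) (hr : 0 < r) (k : ℕ) {x : ℝ} (hx : x ≠ 0) :
    gammaPDFReal a r x * x ^ k
      = Gamma (a + k) / (Gamma a * r ^ k) * gammaPDFReal (a + k) r x := by
  unfold gammaPDFReal
  split_ifs with hx0
  · have hxpos : 0 < x := lt_of_le_of_ne hx0 (Ne.symm hx)
    rw [show a + k - 1 = (a - 1) + k by ring, rpow_add hxpos, rpow_add hr, rpow_natCast,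
      rpow_natCast]
    have := (Gamma_pos_of_pos ha).ne'
    have := (Gamma_pos_of_pos (by positivity : 0 < a + k)).ne'
    field_simp
  · simp

lemma integral_gammaPDFReal (ha : 0 < a) (hr : 0 < r) : ∫ x, gammaPDFReal a r x = 1 := by
  have := isProbabilityMeasure_gammaMeasure ha hr
  simpa using (integral_gammaMeasure ha hr (fun _ ↦ 1)).symm

lemma integral_pow_gammaMeasure (ha : 0 < a) (hr : 0 < r) (k : ℕ) :
    ∫ x, x ^ k ∂gammaMeasure a r = Gamma (a + k) / (Gamma a * r ^ k) := by
  rw [integral_gammaMeasure ha hr, integral_congr_ae ((Measure.ae_ne volume 0).mono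
    fun x hx ↦ gammaPDFReal_mul_pow ha hr k hx), integral_const_mul,
    integral_gammaPDFReal (by positivity) hr, mul_one]

lemma integrable_pow_gammaMeasure (ha : 0 < a) (hr : 0 < r) (k : ℕ) :
    Integrable (fun x ↦ x ^ k) (gammaMeasure a r) := by
  have := isProbabilityMeasure_gammaMeasure ha hr
  -- the Bochner integral of a non-integrable function is `0`
  refine Integrable.of_integral_ne_zero ?_
  rw [integral_pow_gammaMeasure ha hr k]
  have := Gamma_pos_of_pos (by positivity : 0 < a + k)
  have := Gamma_pos_of_pos ha
  positivity

lemma memLp_id_gammaMeasure (ha : 0 < a) (hr : 0 < r) : MemLp id 2 (gammaMeasure a r) :=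
  (memLp_two_iff_integrable_sq aestronglyMeasurable_id).2 (integrable_pow_gammaMeasure ha hr 2)

lemma variance_id_gammaMeasure (ha : 0 < a) (hr : 0 < r) :
    Var[id; gammaMeasure a r] = a / r ^ 2 := by
  have := isProbabilityMeasure_gammaMeasure ha hr
  have h1 := integral_pow_gammaMeasure ha hr 1
  have h2 := integral_pow_gammaMeasure ha hr 2
  simp only [pow_one, Nat.cast_one, Nat.cast_ofNat] at h1 h2
  rw [variance_eq_sub (memLp_id_gammaMeasure ha hr)]
  simp only [Pi.pow_apply, id]
  rw [h1, h2, show a + 2 = (a + 1) + 1 by ring, Gamma_add_one (by positivity),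
    Gamma_add_one ha.ne']
  have := (Gamma_pos_of_pos ha).ne'
  field_simp
  ring

lemma variance_of_map_eq_gammaMeasure {Ω : Type*} [MeasurableSpace Ω] {P : Measure Ω}
    (ha : 0 < a) (hr : 0 < r) {X : Ω → ℝ} (hX : AEMeasurable X P)
    (hmap : P.map X = gammaMeasure a r) : Var[X; P] = a / r ^ 2 := by
  rw [← Function.id_comp X, ← variance_map aemeasurable_id hX, hmap,
    variance_id_gammaMeasure ha hr]

end ProbabilityTheory

lemma image_exp_neg_Ioi : (fun t : ℝ ↦ exp (-t)) '' Ioi 0 = Ioo 0 1 := by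
  ext x
  constructor
  · rintro ⟨t, ht, rfl⟩
    exact ⟨exp_pos _, exp_lt_one_iff.2 (neg_lt_zero.2 ht)⟩
  · rintro ⟨hx0, hx1⟩
    exact ⟨-log x, neg_pos.2 (log_neg hx0 hx1), by simp [exp_log hx0]⟩

lemma integral_Ioo_zero_one_eq_integral_exp_neg (g : ℝ → ℝ) :
    ∫ x in Ioo 0 1, g x = ∫ t in Ioi 0, exp (-t) * g (exp (-t)) := by
  have hderiv (t : ℝ) (_ : t ∈ Ioi 0) :
      HasDerivWithinAt (fun t ↦ exp (-t)) (-exp (-t)) (Ioi 0) t := by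
    simpa using (hasDerivAt_neg t).exp.hasDerivWithinAt
  rw [← image_exp_neg_Ioi, integral_image_eq_integral_abs_deriv_smul measurableSet_Ioi hderiv
    fun _ _ _ _ h ↦ neg_inj.1 (exp_injective h)]
  simp [abs_of_pos (exp_pos _)]

lemma exp_neg_mul_pow_mul_neg_log_pow (n k : ℕ) (t : ℝ) :
    exp (-t) * (exp (-t) ^ n * (-log (exp (-t))) ^ k)
      = t ^ ((k + 1 : ℝ) - 1) * exp (-((n + 1) * t)) := by
  rw [log_exp, neg_neg, add_sub_cancel_right, rpow_natCast, ← exp_nat_mul,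
    show -((n + 1 : ℝ) * t) = -t + n * -t by ring, exp_add]
  ring

lemma integral_pow_mul_neg_log_pow (n k : ℕ) :
    ∫ x in Ioo 0 1, x ^ n * (-log x) ^ k = k ! / (n + 1) ^ (k + 1) := by
  rw [integral_Ioo_zero_one_eq_integral_exp_neg]
  simp_rw [exp_neg_mul_pow_mul_neg_log_pow]
  rw [integral_rpow_mul_exp_neg_mul_Ioi (by positivity) (by positivity),
    Gamma_nat_eq_factorial, ← Nat.cast_add_one k, rpow_natCast, one_div_pow]
  ring

lemma integrableOn_pow_mul_neg_log_pow (n k : ℕ) :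
    IntegrableOn (fun x ↦ x ^ n * (-log x) ^ k) (Ioo 0 1) := by
  refine Integrable.of_integral_ne_zero ?_
  rw [integral_pow_mul_neg_log_pow]
  positivity

lemma hasSum_sub_succ_of_antitone {f : ℕ → ℝ} {l : ℝ} (hf : Antitone f)
    (hl : Tendsto f atTop (𝓝 l)) : HasSum (fun n ↦ f n - f (n + 1)) (f 0 - l) := by
  rw [hasSum_iff_tendsto_nat_of_nonneg fun n ↦ sub_nonneg.2 (hf n.le_succ)]
  simp_rw [Finset.sum_range_sub']
  exact tendsto_const_nhds.sub hl

lemma hasSum_one_div_mul_sq_succ :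
    HasSum (fun n : ℕ ↦ 1 / ((n + 1) * (n + 2) ^ 2 : ℝ)) (2 - π ^ 2 / 6) := by
  have htele : HasSum (fun n : ℕ ↦ 1 / (n + 1 : ℝ) - 1 / (n + 2 : ℝ)) 1 := by
    convert hasSum_sub_succ_of_antitone (f := fun n : ℕ ↦ 1 / (n + 1 : ℝ))
      (fun m n h ↦ by dsimp only; gcongr) tendsto_one_div_add_atTop_nhds_zero_nat using 1
    · push_cast; ring_nf
    · simp
  have hzeta : HasSum (fun n : ℕ ↦ 1 / (n + 2 : ℝ) ^ 2) (π ^ 2 / 6 - 1) := by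
    simpa [Finset.sum_range_succ] using (hasSum_nat_add_iff' 2).2 hasSum_zeta_two
  have hsplit (n : ℕ) : 1 / ((n + 1) * (n + 2) ^ 2 : ℝ)
      = (1 / (n + 1 : ℝ) - 1 / (n + 2 : ℝ)) - 1 / (n + 2 : ℝ) ^ 2 := by
    field_simp
    ring
  simp_rw [hsplit, show (2 : ℝ) - π ^ 2 / 6 = 1 - (π ^ 2 / 6 - 1) by ring]
  exact htele.sub hzeta

lemma memLp_log_Ioo : MemLp log 2 (volume.restrict (Ioo 0 1)) :=
  (memLp_two_iff_integrable_sq measurable_log.aestronglyMeasurable).2 <| by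
    simpa [IntegrableOn] using integrableOn_pow_mul_neg_log_pow 0 2

lemma integral_log_Ioo : ∫ x in Ioo 0 1, log x = -1 := by
  simpa [integral_neg, neg_eq_iff_eq_neg] using integral_pow_mul_neg_log_pow 0 1

lemma measurePreserving_one_sub_Ioo :
    MeasurePreserving (fun x : ℝ ↦ 1 - x) (volume.restrict (Ioo 0 1))
      (volume.restrict (Ioo 0 1)) := by
  have h := (Measure.measurePreserving_sub_left volume (1 : ℝ)).restrict_preimage
    (measurableSet_Ioo (a := 0) (b := 1))
  convert h using 2
  ext x
  simp only [mem_Ioo, mem_preimage]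
  constructor <;> intro h <;> constructor <;> linarith [h.1, h.2]

lemma memLp_log_one_sub_Ioo : MemLp (fun x ↦ log (1 - x)) 2 (volume.restrict (Ioo 0 1)) :=
  memLp_log_Ioo.comp_measurePreserving measurePreserving_one_sub_Ioo

lemma integral_log_one_sub_Ioo : ∫ x in Ioo 0 1, log (1 - x) = -1 := by
  rw [measurePreserving_one_sub_Ioo.integral_comp
    (Homeomorph.subLeft (1 : ℝ)).measurableEmbedding log, integral_log_Ioo]

lemma hasSum_log_mul_log_one_sub {x : ℝ} (hx : x ∈ Ioo 0 1) :
    HasSum (fun n : ℕ ↦ -log x * (x ^ (n + 1) / (n + 1))) (log x * log (1 - x)) := by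
  have h := (hasSum_pow_div_log_of_abs_lt_one (abs_lt.2 ⟨by linarith [hx.1], hx.2⟩)).mul_left
    (-log x)
  rwa [neg_mul_neg] at h

lemma integral_log_mul_log_one_sub_Ioo :
    ∫ x in Ioo 0 1, log x * log (1 - x) = 2 - π ^ 2 / 6 := by
  set F : ℕ → ℝ → ℝ := fun n x ↦ -log x * (x ^ (n + 1) / (n + 1))
  have hF_eq (n : ℕ) : F n = fun x ↦ x ^ (n + 1) * (-log x) ^ 1 / (n + 1) := by
    ext x
    simp only [F]
    ring
  have hF_int (n : ℕ) : IntegrableOn (F n) (Ioo 0 1) := by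
    rw [hF_eq]
    exact (integrableOn_pow_mul_neg_log_pow (n + 1) 1).div_const _
  have hF_integral (n : ℕ) : ∫ x in Ioo 0 1, F n x = 1 / ((n + 1) * (n + 2) ^ 2) := by
    rw [hF_eq, integral_div, integral_pow_mul_neg_log_pow]
    push_cast
    field_simp
    ring
  have hF_nonneg (n : ℕ) {x : ℝ} (hx : x ∈ Ioo 0 1) : 0 ≤ F n x :=
    mul_nonneg (neg_nonneg.2 (log_nonpos hx.1.le hx.2.le)) (by have := hx.1; positivity)
  have hF_norm (n : ℕ) : ∫ x in Ioo 0 1, ‖F n x‖ = ∫ x in Ioo 0 1, F n x :=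
    setIntegral_congr_fun measurableSet_Ioo fun x hx ↦ norm_of_nonneg (hF_nonneg n hx)
  have h := hasSum_integral_of_summable_integral_norm hF_int
    (hasSum_one_div_mul_sq_succ.summable.congr fun n ↦ by rw [hF_norm, hF_integral])
  rw [setIntegral_congr_fun measurableSet_Ioo
    fun x hx ↦ (hasSum_log_mul_log_one_sub hx).tsum_eq.symm]
  exact h.unique (by simpa [hF_integral] using hasSum_one_div_mul_sq_succ)

lemma covariance_log_log_one_sub_Ioo :
    cov[log, fun x ↦ log (1 - x); volume.restrict (Ioo 0 1)] = 1 - π ^ 2 / 6 := by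
  have : IsProbabilityMeasure (volume.restrict (Ioo (0 : ℝ) 1)) := ⟨by simp⟩
  rw [covariance_eq_sub memLp_log_Ioo memLp_log_one_sub_Ioo]
  simp only [Pi.mul_apply]
  rw [integral_log_mul_log_one_sub_Ioo, integral_log_Ioo, integral_log_one_sub_Ioo]
  ring

lemma covariance_log_log_one_sub_of_map_eq {Ω : Type*} [MeasurableSpace Ω] {P : Measure Ω}
    {V : Ω → ℝ} (hV : AEMeasurable V P) (hmap : P.map V = volume.restrict (Ioo 0 1)) :
    cov[fun ω ↦ log (V ω), fun ω ↦ log (1 - V ω); P] = 1 - π ^ 2 / 6 := by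
  rw [← covariance_map_fun (Y := fun x ↦ log (1 - x)) measurable_log.aestronglyMeasurable
    (measurable_log.comp (measurable_const.sub measurable_id)).aestronglyMeasurable hV, hmap]
  exact covariance_log_log_one_sub_Ioo

theorem stmt_3_general {Ω : Type*} [MeasureSpace Ω] [IsProbabilityMeasure (ℙ : Measure Ω)]
    (r s : ℕ) (hrs : r ≤ s)
    (U : Fin s → Ω → ℝ) (hU : ∀ i, Measurable (U i))
    (hunif : ∀ i, Measure.map (U i) ℙ = volume.restrict (Set.Ioo (0:ℝ) 1))
    (hindepU : iIndepFun U ℙ)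
    (α₀ : ℝ) (hα₀ : 0 < α₀)
    (X₀ : Ω → ℝ) (hX₀ : Measurable X₀)
    (hgamma : Measure.map X₀ ℙ = gammaMeasure α₀ 1)
    (hindep : IndepFun X₀ (fun ω => fun i => U i ω) ℙ)
    (Y₁ Y₂ : Ω → ℝ)
    (hY₁ : Y₁ = fun ω => X₀ ω - ∑ i ∈ Finset.univ.filter (fun i : Fin s => (i : ℕ) < r),
      Real.log (U i ω))
    (hY₂ : Y₂ = fun ω => X₀ ω - ∑ i : Fin s, Real.log (1 - U i ω)) :
    (∫ ω, Y₁ ω * Y₂ ω ∂ℙ) - (∫ ω, Y₁ ω ∂ℙ) * (∫ ω, Y₂ ω ∂ℙ)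
      = α₀ + r * (1 - Real.pi ^ 2 / 6) := by
  set F := Finset.univ.filter (fun i : Fin s => (i : ℕ) < r)
  have hF : F.card = r := by simp [F, Fin.card_filter_val_lt, hrs]
  have hlog_one_sub : Measurable fun x : ℝ ↦ log (1 - x) := by fun_prop
  have hX : MemLp X₀ 2 ℙ :=
    memLp_comp_of_map_eq hX₀.aemeasurable hgamma (memLp_id_gammaMeasure hα₀ one_pos)
  have hA (i : Fin s) : MemLp (fun ω ↦ log (U i ω)) 2 ℙ :=
    memLp_comp_of_map_eq (hU i).aemeasurable (hunif i) memLp_log_Ioo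
  have hB (j : Fin s) : MemLp (fun ω ↦ log (1 - U j ω)) 2 ℙ :=
    memLp_comp_of_map_eq (hU j).aemeasurable (hunif j) memLp_log_one_sub_Ioo
  have hXB (j : Fin s) : cov[X₀, fun ω ↦ log (1 - U j ω); ℙ] = 0 :=
    (hindep.comp measurable_id (hlog_one_sub.comp (measurable_pi_apply j))).covariance_eq_zero
      hX (hB j)
  have hAX (i : Fin s) : cov[fun ω ↦ log (U i ω), X₀; ℙ] = 0 :=
    (hindep.comp measurable_id (measurable_log.comp (measurable_pi_apply i))).symm
      |>.covariance_eq_zero (hA i) hX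
  have hAB (i j : Fin s) : cov[fun ω ↦ log (U i ω), fun ω ↦ log (1 - U j ω); ℙ]
      = if i = j then 1 - π ^ 2 / 6 else 0 := by
    split_ifs with hij
    · exact hij ▸ covariance_log_log_one_sub_of_map_eq (hU i).aemeasurable (hunif i)
    · exact ((hindepU.indepFun hij).comp measurable_log hlog_one_sub).covariance_eq_zero
        (hA i) (hB j)
  have hsumA : MemLp (fun ω ↦ ∑ i ∈ F, log (U i ω)) 2 ℙ := memLp_finsetSum F fun i _ ↦ hA i
  have hsumB : MemLp (fun ω ↦ ∑ j, log (1 - U j ω)) 2 ℙ := memLp_finsetSum _ fun j _ ↦ hB j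
  rw [show (∫ ω, Y₁ ω * Y₂ ω ∂ℙ) = ℙ[Y₁ * Y₂] from rfl,
    ← covariance_eq_sub (hY₁ ▸ hX.sub hsumA) (hY₂ ▸ hX.sub hsumB), hY₁, hY₂,
    covariance_fun_sub_fun_sub hX hsumA hX hsumB, covariance_fun_sum_right' (fun j _ ↦ hB j) hX,
    covariance_fun_sum_left' (fun i _ ↦ hA i) hX,
    covariance_fun_sum_fun_sum' (fun i _ ↦ hA i) (fun j _ ↦ hB j),
    covariance_self hX₀.aemeasurable, variance_of_map_eq_gammaMeasure hα₀ one_pos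
      hX₀.aemeasurable hgamma]
  simp only [hXB, hAX, hAB, Finset.sum_ite_eq, Finset.mem_univ, if_true, Finset.sum_const_zero,
    Finset.sum_const, hF, nsmul_eq_mul, sub_zero, one_pow, div_one]

theorem stmt_3 {Ω : Type*} [MeasureSpace Ω] [IsProbabilityMeasure (ℙ : Measure Ω)]
    (r s : ℕ) (hr : 0 < r) (hrs : r ≤ s)
    (U : Fin s → Ω → ℝ) (hU : ∀ i, Measurable (U i))
    (hunif : ∀ i, Measure.map (U i) ℙ = volume.restrict (Set.Ioo (0:ℝ) 1))
    (hindepU : iIndepFun U ℙ)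
    (α₀ : ℝ) (hα₀ : 0 < α₀)
    (X₀ : Ω → ℝ) (hX₀ : Measurable X₀)
    (hgamma : Measure.map X₀ ℙ = gammaMeasure α₀ 1)
    (hindep : IndepFun X₀ (fun ω => fun i => U i ω) ℙ)
    (Y₁ Y₂ : Ω → ℝ)
    (hY₁ : Y₁ = fun ω => X₀ ω - ∑ i ∈ Finset.univ.filter (fun i : Fin s => (i : ℕ) < r),
      Real.log (U i ω))
    (hY₂ : Y₂ = fun ω => X₀ ω - ∑ i : Fin s, Real.log (1 - U i ω)) :
    (∫ ω, Y₁ ω * Y₂ ω ∂ℙ) - (∫ ω, Y₁ ω ∂ℙ) * (∫ ω, Y₂ ω ∂ℙ)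
      = α₀ + r * (1 - Real.pi ^ 2 / 6) :=
  stmt_3_general r s hrs U hU hunif hindepU α₀ hα₀ X₀ hX₀ hgamma hindep Y₁ Y₂ hY₁ hY₂
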